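/- For all μ, λ ∈ ℝ, as z → 2 from the right one has Δ(μ,λ;z) = B₂ (μλ − μ − λ)(z−2)^{−1/2} + (1 + λ − μλ) + O((z−2)^{1/2}) with the constant B₂ = 1/√2 > 0; i.e. the function z ↦ Δ(μ,λ;z) − B₂(μλ−μ−λ)(z−2)^{−1/2} − (1+λ−μλ) is O((z−2)^{1/2}) along right neighborhoods of 2. -/

import Mathlib

/-! With `A = z - 1`, partial fractions reduce `b` and `c` to `a`: `b = A a - 1` and
`c = A² a - A`, so `Δ = 1 + λA - μλ + (μλA - λA² - μ) a`. The classical integral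
`∫_{-π}^{π} dq / (A + cos q) = 2π / √(A² - 1)` gives `a(z) = 1 / (√(z - 2) √z)`.
Hence, with `t = z - 2`, the error term is `λ t + (g t - g 0) t^{-1/2}` for the smooth function
`g t = (μλ(t + 1) - λ(t + 1)² - μ) / √(t + 2)`, and both summands are `O(t^{1/2})`. -/

open MeasureTheory Real Filter Topology Asymptotics

/-- `a(z) = (1/2π)∫_{−π}^{π} dq/(z − 1 + cos q)`. -/
noncomputable def aF (z : ℝ) : ℝ :=
  (2 * Real.pi)⁻¹ * ∫ q in (-Real.pi)..Real.pi, (z - 1 + Real.cos q)⁻¹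

/-- `b(z) = −(1/2π)∫_{−π}^{π} cos q dq/(z − 1 + cos q)`. -/
noncomputable def bF (z : ℝ) : ℝ :=
  -((2 * Real.pi)⁻¹ * ∫ q in (-Real.pi)..Real.pi, Real.cos q / (z - 1 + Real.cos q))

/-- `c(z) = (1/2π)∫_{−π}^{π} cos² q dq/(z − 1 + cos q)`. -/
noncomputable def cF (z : ℝ) : ℝ :=
  (2 * Real.pi)⁻¹ * ∫ q in (-Real.pi)..Real.pi, (Real.cos q) ^ 2 / (z - 1 + Real.cos q)

/-- The Fredholm determinant `Δ(μ,λ;z) = (1 − μ a(z))(1 − λ c(z)) − μλ b(z)²`. -/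
noncomputable def Δdet (μ lam z : ℝ) : ℝ :=
  (1 - μ * aF z) * (1 - lam * cF z) - μ * lam * (bF z) ^ 2

lemma add_mul_cos_pos {a b : ℝ} (hab : |b| < a) (x : ℝ) : 0 < a + b * cos x := by
  have : |b * cos x| ≤ |b| := by
    rw [abs_mul]; exact mul_le_of_le_one_right (abs_nonneg b) (abs_cos_le_one x)
  linarith [neg_abs_le (b * cos x)]

/-- Unlike the Weierstrass-substitution primitive `2 arctan (√((a-b)/(a+b)) tan (x/2)) / r`, which
jumps at `x = ±π`, this primitive is smooth on all of `ℝ`. -/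
lemma hasDerivAt_inv_add_mul_cos_primitive {a b : ℝ} (hab : |b| < a) (x : ℝ) :
    HasDerivAt
      (fun x => (x - 2 * arctan (b * sin x / (a + √(a ^ 2 - b ^ 2) + b * cos x)))
        / √(a ^ 2 - b ^ 2))
      (a + b * cos x)⁻¹ x := by
  set r := √(a ^ 2 - b ^ 2)
  have hK : 0 < a ^ 2 - b ^ 2 := by nlinarith [abs_nonneg b, sq_abs b]
  have hr : 0 < r := sqrt_pos.2 hK
  have hr2 : r ^ 2 = a ^ 2 - b ^ 2 := sq_sqrt hK.le
  have hD : 0 < a + r + b * cos x := by linarith [add_mul_cos_pos hab x]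
  have hu : HasDerivAt (fun x => b * sin x / (a + r + b * cos x))
      ((b * cos x * (a + r + b * cos x) - b * sin x * (-(b * sin x)))
        / (a + r + b * cos x) ^ 2) x :=
    ((hasDerivAt_sin x).const_mul b).div
      (((hasDerivAt_cos x).const_mul b).const_add (a + r) |>.congr_deriv (by ring)) hD.ne'
  refine ((hasDerivAt_id x).sub (hu.arctan.const_mul 2)).div_const r |>.congr_deriv ?_
  have hpos := add_mul_cos_pos hab x
  field_simp
  linear_combination (-b ^ 2 * (a + r + b * cos x)) * sin_sq_add_cos_sq x
    - (a + r + b * cos x) * hr2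

lemma integral_inv_add_mul_cos {a b : ℝ} (hab : |b| < a) :
    ∫ x in -π..π, (a + b * cos x)⁻¹ = 2 * π / √(a ^ 2 - b ^ 2) := by
  have hint : IntervalIntegrable (fun x => (a + b * cos x)⁻¹) volume (-π) π :=
    (by fun_prop (disch := exact fun x => (add_mul_cos_pos hab x).ne') :
      Continuous fun x => (a + b * cos x)⁻¹).intervalIntegrable _ _
  rw [intervalIntegral.integral_eq_sub_of_hasDerivAt
    (fun x _ => hasDerivAt_inv_add_mul_cos_primitive hab x) hint]
  simp only [sin_pi, sin_neg, neg_zero, mul_zero, zero_div, arctan_zero]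
  ring

lemma aF_eq {z : ℝ} (hz : 2 < z) : aF z = (√(z - 2) * √z)⁻¹ := by
  have h := integral_inv_add_mul_cos (a := z - 1) (b := 1) (by rw [abs_one]; linarith)
  simp only [one_mul, one_pow] at h
  rw [aF, h, show (z - 1) ^ 2 - 1 = (z - 2) * z by ring, sqrt_mul (by linarith)]
  field_simp

lemma intervalIntegrable_inv_sub_one_add_cos {z : ℝ} (hz : ∀ q, z - 1 + cos q ≠ 0) :
    IntervalIntegrable (fun q => (z - 1 + cos q)⁻¹) volume (-π) π :=
  (by fun_prop (disch := exact hz) :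
    Continuous fun q => (z - 1 + cos q)⁻¹).intervalIntegrable _ _

lemma bF_eq {z : ℝ} (hz : ∀ q, z - 1 + cos q ≠ 0) : bF z = (z - 1) * aF z - 1 := by
  have hsplit : ∫ q in -π..π, cos q / (z - 1 + cos q)
      = ∫ q in -π..π, (1 - (z - 1) * (z - 1 + cos q)⁻¹) :=
    intervalIntegral.integral_congr fun q _ => by field_simp [hz q]; ring
  rw [bF, aF, hsplit, intervalIntegral.integral_sub intervalIntegrable_const
    ((intervalIntegrable_inv_sub_one_add_cos hz).const_mul _),
    intervalIntegral.integral_const_mul, intervalIntegral.integral_const]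
  field_simp
  ring

lemma cF_eq {z : ℝ} (hz : ∀ q, z - 1 + cos q ≠ 0) : cF z = (z - 1) ^ 2 * aF z - (z - 1) := by
  have hsplit : ∫ q in -π..π, cos q ^ 2 / (z - 1 + cos q)
      = ∫ q in -π..π, (cos q - (z - 1) + (z - 1) ^ 2 * (z - 1 + cos q)⁻¹) :=
    intervalIntegral.integral_congr fun q _ => by field_simp [hz q]; ring
  have hcos : IntervalIntegrable (fun q => cos q - (z - 1)) volume (-π) π :=
    (continuous_cos.sub continuous_const).intervalIntegrable _ _
  rw [cF, aF, hsplit, intervalIntegral.integral_add hcos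
    ((intervalIntegrable_inv_sub_one_add_cos hz).const_mul _),
    intervalIntegral.integral_const_mul, intervalIntegral.integral_sub
    (continuous_cos.intervalIntegrable _ _) intervalIntegrable_const, integral_cos,
    intervalIntegral.integral_const]
  simp only [sin_pi, sin_neg, smul_eq_mul]
  field_simp
  ring

lemma Δdet_eq {μ lam z : ℝ} (hz : ∀ q, z - 1 + cos q ≠ 0) :
    Δdet μ lam z = 1 + lam * (z - 1) - μ * lam
      + (μ * lam * (z - 1) - lam * (z - 1) ^ 2 - μ) * aF z := by
  rw [Δdet, bF_eq hz, cF_eq hz]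
  ring

lemma isBigO_rpow_rpow_nhdsGT_zero {a b : ℝ} (hab : a ≤ b) :
    (fun t : ℝ => t ^ b) =O[𝓝[>] 0] fun t => t ^ a := by
  refine IsBigO.of_bound 1 ?_
  filter_upwards [Ioo_mem_nhdsGT zero_lt_one] with t ⟨ht0, ht1⟩
  rw [norm_of_nonneg (rpow_nonneg ht0.le _), norm_of_nonneg (rpow_nonneg ht0.le _), one_mul]
  exact rpow_le_rpow_of_exponent_ge ht0 ht1.le hab

lemma DifferentiableAt.isBigO_sub_mul_rpow_nhdsGT_zero {g : ℝ → ℝ}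
    (hg : DifferentiableAt ℝ g 0) (s : ℝ) :
    (fun t => (g t - g 0) * t ^ s) =O[𝓝[>] 0] fun t => t ^ (1 + s) := by
  have hlin : (fun t => g t - g 0) =O[𝓝[>] 0] fun t => t := by
    simpa using hg.isBigO_sub.mono nhdsWithin_le_nhds
  refine (hlin.mul (isBigO_refl (fun t => t ^ s) _)).congr' EventuallyEq.rfl ?_
  filter_upwards [self_mem_nhdsWithin] with t (ht : 0 < t)
  rw [rpow_add ht, rpow_one]

/-- For all `μ, λ ∈ ℝ`, as `z → 2⁺`:
`Δ(μ,λ;z) = B₂ (μλ − μ − λ)(z−2)^{−1/2} + (1 + λ − μλ) + O((z−2)^{1/2})`,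
with `B₂ = 1/√2 > 0`. -/
theorem det_asymptotics_right_of_two (μ lam : ℝ) :
    (0 : ℝ) < (Real.sqrt 2)⁻¹ ∧
    (fun z : ℝ => Δdet μ lam z
        - (Real.sqrt 2)⁻¹ * (μ * lam - μ - lam) * (z - 2) ^ (-(1/2) : ℝ)
        - (1 + lam - μ * lam))
      =O[𝓝[>] (2:ℝ)] (fun z : ℝ => (z - 2) ^ ((1/2) : ℝ)) := by
  set g : ℝ → ℝ := fun t => (μ * lam * (t + 1) - lam * (t + 1) ^ 2 - μ) / √(t + 2)
  have hg : DifferentiableAt ℝ g 0 := by fun_prop (disch := norm_num)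
  have hg0 : g 0 = (√2)⁻¹ * (μ * lam - μ - lam) := by
    simp only [g]; ring_nf
  have hE : (fun t => lam * t ^ (1 : ℝ) + (g t - g 0) * t ^ (-(1/2) : ℝ))
      =O[𝓝[>] 0] fun t => t ^ ((1/2) : ℝ) := by
    refine ((isBigO_rpow_rpow_nhdsGT_zero (by norm_num)).const_mul_left lam).add ?_
    have h := hg.isBigO_sub_mul_rpow_nhdsGT_zero (-(1/2))
    rwa [show (1 : ℝ) + -(1/2) = 1/2 by norm_num] at h
  have hshift : Tendsto (fun z : ℝ => z - 2) (𝓝[>] 2) (𝓝[>] 0) :=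
    tendsto_nhdsWithin_iff.2 ⟨((continuous_sub_right 2).tendsto' 2 0 (sub_self 2)).mono_left
      nhdsWithin_le_nhds,
      by filter_upwards [self_mem_nhdsWithin] with z (hz : 2 < z) using sub_pos.2 hz⟩
  refine ⟨by positivity, (hE.comp_tendsto hshift).congr' ?_ EventuallyEq.rfl⟩
  filter_upwards [self_mem_nhdsWithin] with z (hz : 2 < z)
  simp only [Function.comp_apply, hg0, g]
  rw [Δdet_eq (fun q => (by linarith [neg_one_le_cos q] : 0 < z - 1 + cos q).ne'), aF_eq hz,
    show z - 2 + 1 = z - 1 by ring, show z - 2 + 2 = z by ring, rpow_one,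
    rpow_neg (by linarith), ← sqrt_eq_rpow]
  have hsqrt : 0 < √(z - 2) := sqrt_pos.2 (by linarith)
  field_simp
  ring
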